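/- Let X ⊆ ℝ^m and Y ⊆ ℝ^n be nonempty, compact, convex sets, and let f : ℝ^m × ℝ^n → ℝ be continuous, convex in its first argument on X for each fixed y ∈ Y and concave in its second argument on Y for each fixed x ∈ X. Let T ≥ 1, let x^1,…,x^T ∈ X and y^1,…,y^T ∈ Y be arbitrary sequences, and define x̄ := (1/T)∑_{t=1}^T x^t, ȳ := (1/T)∑_{t=1}^T y^t, r₁(T) := ∑_{t=1}^T f(x^t,y^t) − min_{x∈X} ∑_{t=1}^T f(x,y^t), r₂(T) := max_{y∈Y} ∑_{t=1}^T f(x^t,y) − ∑_{t=1}^T f(x^t,y^t), and v* := min_{x∈X} max_{y∈Y} f(x,y). Then the suboptimality gaps satisfy 0 ≤ max_{y∈Y} f(x̄,y) − v* ≤ (r₁(T)+r₂(T))/T and 0 ≤ v* − min_{x∈X} f(x,ȳ) ≤ (r₁(T)+r₂(T))/T. -/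

import Mathlib

/-!
By Jensen's inequality, `f x̄ y ≤ T⁻¹ ∑ₜ f (xₜ) y` for every `y ∈ Y`, so
`max_y f x̄ y ≤ T⁻¹ max_y ∑ₜ f (xₜ) y`; dually `min_x f x ȳ ≥ T⁻¹ min_x ∑ₜ f x (yₜ)`.
Subtracting, the duality gap `max_y f x̄ y - min_x f x ȳ` is at most `(r₁ + r₂) / T`, and weak
duality places `v*` between `min_x f x ȳ` and `max_y f x̄ y`.
-/

open Finset Set

section Average

variable {ι E : Type*} [Fintype ι] [Nonempty ι] [AddCommGroup E] [Module ℝ E]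

lemma sum_inv_card_eq_one : ∑ _i : ι, (Fintype.card ι : ℝ)⁻¹ = 1 := by
  simp [Finset.card_univ]

lemma Convex.inv_card_smul_sum_mem {s : Set E} (hs : Convex ℝ s) {z : ι → E}
    (hz : ∀ i, z i ∈ s) : (Fintype.card ι : ℝ)⁻¹ • ∑ i, z i ∈ s := by
  rw [smul_sum]
  exact hs.sum_mem (fun _ _ => by positivity) sum_inv_card_eq_one fun i _ => hz i

lemma ConvexOn.map_inv_card_smul_sum_le {s : Set E} {g : E → ℝ} (hg : ConvexOn ℝ s g)
    {z : ι → E} (hz : ∀ i, z i ∈ s) :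
    g ((Fintype.card ι : ℝ)⁻¹ • ∑ i, z i) ≤ (Fintype.card ι : ℝ)⁻¹ * ∑ i, g (z i) := by
  rw [smul_sum, mul_sum]
  exact hg.map_sum_le (fun _ _ => by positivity) sum_inv_card_eq_one fun i _ => hz i

lemma ConcaveOn.inv_card_mul_sum_le_map {s : Set E} {g : E → ℝ} (hg : ConcaveOn ℝ s g)
    {z : ι → E} (hz : ∀ i, z i ∈ s) :
    (Fintype.card ι : ℝ)⁻¹ * ∑ i, g (z i) ≤ g ((Fintype.card ι : ℝ)⁻¹ • ∑ i, z i) := by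
  rw [smul_sum, mul_sum]
  exact hg.le_map_sum (fun _ _ => by positivity) sum_inv_card_eq_one fun i _ => hz i

end Average

section Bounds

variable {α : Type*} {s : Set α} {g h : α → ℝ} {c : ℝ}

lemma csSup_image_le_mul_csSup_image (hc : 0 ≤ c) (hs : s.Nonempty) (hh : BddAbove (h '' s))
    (hgh : ∀ a ∈ s, g a ≤ c * h a) : sSup (g '' s) ≤ c * sSup (h '' s) :=
  csSup_le (hs.image g) <| forall_mem_image.2 fun a ha =>
    (hgh a ha).trans <| mul_le_mul_of_nonneg_left (le_csSup hh (mem_image_of_mem h ha)) hc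

lemma mul_csInf_image_le_csInf_image (hc : 0 ≤ c) (hs : s.Nonempty) (hh : BddBelow (h '' s))
    (hhg : ∀ a ∈ s, c * h a ≤ g a) : c * sInf (h '' s) ≤ sInf (g '' s) :=
  le_csInf (hs.image g) <| forall_mem_image.2 fun a ha =>
    (mul_le_mul_of_nonneg_left (csInf_le hh (mem_image_of_mem h ha)) hc).trans (hhg a ha)

end Bounds

section WeakDuality

variable {E F : Type*} {X : Set E} {Y : Set F} {f : E → F → ℝ}
  (hfX : ∀ y ∈ Y, BddBelow ((fun x => f x y) '' X)) (hfY : ∀ x ∈ X, BddAbove (f x '' Y))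
include hfX hfY

lemma csInf_image_le_csSup_image {x₀ : E} {y₀ : F} (hx₀ : x₀ ∈ X) (hy₀ : y₀ ∈ Y) :
    sInf ((fun x => f x y₀) '' X) ≤ sSup (f x₀ '' Y) :=
  (csInf_le (hfX y₀ hy₀) (mem_image_of_mem _ hx₀)).trans
    (le_csSup (hfY x₀ hx₀) (mem_image_of_mem _ hy₀))

lemma csInf_image_le_minimax {y₀ : F} (hy₀ : y₀ ∈ Y) (hX : X.Nonempty) :
    sInf ((fun x => f x y₀) '' X) ≤ sInf ((fun x => sSup (f x '' Y)) '' X) :=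
  le_csInf (hX.image _) <| forall_mem_image.2 fun _ hx => csInf_image_le_csSup_image hfX hfY hx hy₀

lemma minimax_le_csSup_image {x₀ : E} (hx₀ : x₀ ∈ X) (hY : Y.Nonempty) :
    sInf ((fun x => sSup (f x '' Y)) '' X) ≤ sSup (f x₀ '' Y) := by
  obtain ⟨y₀, hy₀⟩ := hY
  exact csInf_le ⟨_, forall_mem_image.2 fun _ hx => csInf_image_le_csSup_image hfX hfY hx hy₀⟩
    (mem_image_of_mem _ hx₀)

end WeakDuality

theorem suboptimality_gaps_le_avg_sum_regrets_general
    {m n : ℕ}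
    (X : Set (EuclideanSpace ℝ (Fin m))) (Y : Set (EuclideanSpace ℝ (Fin n)))
    (hXcp : IsCompact X) (hXcv : Convex ℝ X)
    (hYcp : IsCompact Y) (hYcv : Convex ℝ Y)
    (f : EuclideanSpace ℝ (Fin m) → EuclideanSpace ℝ (Fin n) → ℝ)
    (hf : Continuous fun p : EuclideanSpace ℝ (Fin m) × EuclideanSpace ℝ (Fin n) => f p.1 p.2)
    (hfx : ∀ y ∈ Y, ConvexOn ℝ X fun x => f x y)
    (hfy : ∀ x ∈ X, ConcaveOn ℝ Y fun y => f x y)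
    (T : ℕ) (hT : 1 ≤ T)
    (x : Fin T → EuclideanSpace ℝ (Fin m)) (y : Fin T → EuclideanSpace ℝ (Fin n))
    (hx : ∀ t, x t ∈ X) (hy : ∀ t, y t ∈ Y)
    (xbar : EuclideanSpace ℝ (Fin m)) (hxbar : xbar = (T : ℝ)⁻¹ • ∑ t, x t)
    (ybar : EuclideanSpace ℝ (Fin n)) (hybar : ybar = (T : ℝ)⁻¹ • ∑ t, y t)
    (r₁ r₂ : ℝ)
    (hr₁ : r₁ = ∑ t, f (x t) (y t) - sInf ((fun x' => ∑ t, f x' (y t)) '' X))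
    (hr₂ : r₂ = sSup ((fun y' => ∑ t, f (x t) y') '' Y) - ∑ t, f (x t) (y t))
    (vstar : ℝ) (hvstar : vstar = sInf ((fun x' => sSup ((f x') '' Y)) '' X)) :
    (0 ≤ sSup ((f xbar) '' Y) - vstar ∧
      sSup ((f xbar) '' Y) - vstar ≤ (r₁ + r₂) / T) ∧
    (0 ≤ vstar - sInf ((fun x' => f x' ybar) '' X) ∧
      vstar - sInf ((fun x' => f x' ybar) '' X) ≤ (r₁ + r₂) / T) := by
  have : Nonempty (Fin T) := ⟨⟨0, hT⟩⟩
  have hcard : (Fintype.card (Fin T) : ℝ) = T := by simp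
  rw [← hcard] at hxbar hybar
  have hfX : ∀ y' ∈ Y, BddBelow ((fun x' => f x' y') '' X) := fun _ _ =>
    hXcp.bddBelow_image (by fun_prop)
  have hfY : ∀ x' ∈ X, BddAbove (f x' '' Y) := fun _ _ => hYcp.bddAbove_image (by fun_prop)
  have hxbarX : xbar ∈ X := hxbar ▸ hXcv.inv_card_smul_sum_mem hx
  have hybarY : ybar ∈ Y := hybar ▸ hYcv.inv_card_smul_sum_mem hy
  have hmax : sSup (f xbar '' Y) ≤
      (Fintype.card (Fin T) : ℝ)⁻¹ * sSup ((fun y' => ∑ t, f (x t) y') '' Y) :=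
    csSup_image_le_mul_csSup_image (by positivity) ⟨ybar, hybarY⟩
      (hYcp.bddAbove_image (by fun_prop))
      fun y' hy' => hxbar ▸ (hfx y' hy').map_inv_card_smul_sum_le hx
  have hmin : (Fintype.card (Fin T) : ℝ)⁻¹ * sInf ((fun x' => ∑ t, f x' (y t)) '' X) ≤
      sInf ((fun x' => f x' ybar) '' X) :=
    mul_csInf_image_le_csInf_image (by positivity) ⟨xbar, hxbarX⟩
      (hXcp.bddBelow_image (by fun_prop))
      fun x' hx' => hybar ▸ (hfy x' hx').inv_card_mul_sum_le_map hy
  have hgap : sSup (f xbar '' Y) - sInf ((fun x' => f x' ybar) '' X) ≤ (r₁ + r₂) / T := by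
    rw [hr₁, hr₂, div_eq_inv_mul, ← hcard]
    linarith
  have hlower := csInf_image_le_minimax hfX hfY hybarY ⟨xbar, hxbarX⟩
  have hupper := minimax_le_csSup_image hfX hfY hxbarX ⟨ybar, hybarY⟩
  subst hvstar
  constructor <;> constructor <;> linarith

/-- The suboptimality gaps of the average iterates for the dual min and max problems
are bounded by the time-averaged sum of the two players' regrets. -/
theorem suboptimality_gaps_le_avg_sum_regrets
    {m n : ℕ}
    (X : Set (EuclideanSpace ℝ (Fin m))) (Y : Set (EuclideanSpace ℝ (Fin n)))
    (hXne : X.Nonempty) (hXcp : IsCompact X) (hXcv : Convex ℝ X)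
    (hYne : Y.Nonempty) (hYcp : IsCompact Y) (hYcv : Convex ℝ Y)
    (f : EuclideanSpace ℝ (Fin m) → EuclideanSpace ℝ (Fin n) → ℝ)
    (hf : Continuous fun p : EuclideanSpace ℝ (Fin m) × EuclideanSpace ℝ (Fin n) => f p.1 p.2)
    (hfx : ∀ y ∈ Y, ConvexOn ℝ X fun x => f x y)
    (hfy : ∀ x ∈ X, ConcaveOn ℝ Y fun y => f x y)
    (T : ℕ) (hT : 1 ≤ T)
    (x : Fin T → EuclideanSpace ℝ (Fin m)) (y : Fin T → EuclideanSpace ℝ (Fin n))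
    (hx : ∀ t, x t ∈ X) (hy : ∀ t, y t ∈ Y)
    (xbar : EuclideanSpace ℝ (Fin m)) (hxbar : xbar = (T : ℝ)⁻¹ • ∑ t, x t)
    (ybar : EuclideanSpace ℝ (Fin n)) (hybar : ybar = (T : ℝ)⁻¹ • ∑ t, y t)
    (r₁ r₂ : ℝ)
    (hr₁ : r₁ = ∑ t, f (x t) (y t) - sInf ((fun x' => ∑ t, f x' (y t)) '' X))
    (hr₂ : r₂ = sSup ((fun y' => ∑ t, f (x t) y') '' Y) - ∑ t, f (x t) (y t))
    (vstar : ℝ) (hvstar : vstar = sInf ((fun x' => sSup ((f x') '' Y)) '' X)) :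
    (0 ≤ sSup ((f xbar) '' Y) - vstar ∧
      sSup ((f xbar) '' Y) - vstar ≤ (r₁ + r₂) / T) ∧
    (0 ≤ vstar - sInf ((fun x' => f x' ybar) '' X) ∧
      vstar - sInf ((fun x' => f x' ybar) '' X) ≤ (r₁ + r₂) / T) :=
  suboptimality_gaps_le_avg_sum_regrets_general X Y hXcp hXcv hYcp hYcv f hf hfx hfy T hT x y hx hy
    xbar hxbar ybar hybar r₁ r₂ hr₁ hr₂ vstar hvstar
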